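/- In a simple graph where every edge is colored red, green, or blue, if every triangle is rainbow and there are R red, G green, B blue edges and T triangles, then T ≤ √(2·R·G·B). -/

import Mathlib

def Rainbow {V : Type*} [DecidableEq V] (G : SimpleGraph V) (c : Sym2 V → Fin 3) (t : Finset V) : Prop :=
  ∃ a b d : V, t = {a, b, d} ∧ G.Adj a b ∧ G.Adj b d ∧ G.Adj a d ∧
    c s(a, b) ≠ c s(b, d) ∧ c s(b, d) ≠ c s(a, d) ∧ c s(a, b) ≠ c s(a, d)

def IsTriangle {V : Type*} [DecidableEq V] (G : SimpleGraph V) (t : Finset V) : Prop :=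
  ∃ a b d : V, t = {a, b, d} ∧ G.Adj a b ∧ G.Adj b d ∧ G.Adj a d

/-!
Every triangle, being rainbow, is counted exactly once as a green dart `(u, v)` together with an
apex `x` such that `ux` is red and `vx` is blue. Writing `a(u, v)` for the number of such apexes,
Cauchy–Schwarz over the `2G` green darts gives `T² ≤ 2G · ∑ a(u, v)²`. The sum of squares counts
quadruples `(u, v, x, y)`, and `(u, v, x, y) ↦ (ux, vy)` injects them into red × blue edges, so
`∑ a(u, v)² ≤ RB`.
-/

open Finset

theorem isTriangle_iff_isNClique_three {V : Type*} [DecidableEq V] {G : SimpleGraph V}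
    {t : Finset V} : IsTriangle G t ↔ G.IsNClique 3 t := by
  rw [SimpleGraph.is3Clique_iff]
  constructor
  · rintro ⟨a, b, d, rfl, hab, hbd, had⟩
    exact ⟨a, b, d, hab, had, hbd, rfl⟩
  · rintro ⟨a, b, d, hab, had, hbd, rfl⟩
    exact ⟨a, b, d, rfl, hab, hbd, had⟩

theorem Rainbow.exists_eq_insert {V : Type*} [DecidableEq V] {G : SimpleGraph V}
    {c : Sym2 V → Fin 3} {t : Finset V} (ht : Rainbow G c t) :
    ∃ u v w, G.Adj u v ∧ G.Adj u w ∧ G.Adj v w ∧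
      c s(u, v) = 1 ∧ c s(u, w) = 0 ∧ c s(v, w) = 2 ∧ {u, v, w} = t := by
  obtain ⟨x, y, z, rfl, hxy, hyz, hxz, h₁, h₂, h₃⟩ := ht
  have : c s(x, y) = 1 ∧ c s(x, z) = 0 ∧ c s(y, z) = 2 ∨
      c s(x, y) = 1 ∧ c s(x, z) = 2 ∧ c s(y, z) = 0 ∨
      c s(y, z) = 1 ∧ c s(x, y) = 0 ∧ c s(x, z) = 2 ∨
      c s(y, z) = 1 ∧ c s(x, y) = 2 ∧ c s(x, z) = 0 ∨
      c s(x, z) = 1 ∧ c s(x, y) = 0 ∧ c s(y, z) = 2 ∨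
      c s(x, z) = 1 ∧ c s(x, y) = 2 ∧ c s(y, z) = 0 := by
    have := (c s(x, y)).isLt
    have := (c s(y, z)).isLt
    have := (c s(x, z)).isLt
    simp only [Ne, Fin.ext_iff] at h₁ h₂ h₃ ⊢
    omega
  rcases this with ⟨e₁, e₂, e₃⟩ | ⟨e₁, e₂, e₃⟩ | ⟨e₁, e₂, e₃⟩ | ⟨e₁, e₂, e₃⟩ | ⟨e₁, e₂, e₃⟩ |
    ⟨e₁, e₂, e₃⟩
  · exact ⟨x, y, z, hxy, hxz, hyz, e₁, e₂, e₃, rfl⟩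
  · exact ⟨y, x, z, hxy.symm, hyz, hxz, by rwa [Sym2.eq_swap], e₃, e₂, insert_comm y x {z}⟩
  · refine ⟨y, z, x, hyz, hxy.symm, hxz.symm, e₁, by rwa [Sym2.eq_swap], by rwa [Sym2.eq_swap],
      by ext; simp only [mem_insert, mem_singleton]; tauto⟩
  · refine ⟨z, y, x, hyz.symm, hxz.symm, hxy.symm, by rwa [Sym2.eq_swap], by rwa [Sym2.eq_swap],
      by rwa [Sym2.eq_swap], by ext; simp only [mem_insert, mem_singleton]; tauto⟩
  · exact ⟨x, z, y, hxz, hxy, hyz.symm, e₁, e₂, by rwa [Sym2.eq_swap], by rw [pair_comm]⟩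
  · refine ⟨z, x, y, hxz.symm, hyz.symm, hxy, by rwa [Sym2.eq_swap], by rwa [Sym2.eq_swap], e₂,
      by ext; simp only [mem_insert, mem_singleton]; tauto⟩

namespace SimpleGraph

variable {V : Type*} [Fintype V] (G : SimpleGraph V) [DecidableRel G.Adj]

theorem card_filter_dart_edge [DecidableEq V] (p : Sym2 V → Prop) [DecidablePred p] :
    #{d : G.Dart | p d.edge} = 2 * #{e ∈ G.edgeFinset | p e} := by
  rw [card_eq_sum_card_fiberwise (f := Dart.edge) (t := {e ∈ G.edgeFinset | p e})
    fun d hd => by simpa using hd, mul_comm]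
  refine sum_const_nat fun e he => ?_
  rw [mem_filter, mem_edgeFinset] at he
  rw [filter_filter, ← G.dart_edge_fiber_card e he.1]
  exact congrArg card (filter_congr fun d _ => and_iff_right_of_imp fun h => h ▸ he.2)

variable {κ : Type*} [DecidableEq κ] (c : Sym2 V → κ)

def rainbowApexes (r b : κ) (u v : V) : Finset V :=
  {x | G.Adj u x ∧ G.Adj v x ∧ c s(u, x) = r ∧ c s(v, x) = b}

theorem sum_sq_card_rainbowApexes_le {r g b : κ} (hrg : r ≠ g) (hgb : g ≠ b) (hrb : r ≠ b) :
    ∑ d ∈ {d : G.Dart | c d.edge = g}, #(G.rainbowApexes c r b d.fst d.snd) ^ 2 ≤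
      #{e ∈ G.edgeFinset | c e = r} * #{e ∈ G.edgeFinset | c e = b} := by
  simp_rw [sq, ← card_product, ← card_sigma]
  refine card_le_card_of_injOn (fun p => (s(p.1.fst, p.2.1), s(p.1.snd, p.2.2))) ?_ ?_
  · rintro ⟨d, x, y⟩ h
    simp_all [rainbowApexes]
  · rintro ⟨⟨⟨u, v⟩, huv⟩, x, y⟩ h ⟨⟨⟨u', v'⟩, huv'⟩, x', y'⟩ h' heq
    simp only [coe_sigma, Set.mem_sigma_iff, mem_coe, mem_filter, mem_univ, true_and,
      mem_product, rainbowApexes, Prod.mk.injEq, Dart.edge_mk] at h h' heq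
    obtain ⟨-, ⟨-, -, -, hvx⟩, ⟨-, -, huy, -⟩⟩ := h
    obtain ⟨hg', ⟨-, -, -, hvx'⟩, -⟩ := h'
    rcases Sym2.eq_iff.1 heq.1 with ⟨rfl, rfl⟩ | ⟨rfl, rfl⟩ <;>
      rcases Sym2.eq_iff.1 heq.2 with ⟨rfl, rfl⟩ | ⟨rfl, rfl⟩
    · rfl
    · exact absurd (huy.symm.trans hg') hrg
    · rw [Sym2.eq_swap] at hg'
      exact absurd (hg'.symm.trans hvx) hgb
    · rw [Sym2.eq_swap] at hvx'
      exact absurd (huy.symm.trans hvx') hrb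

theorem sq_sum_card_rainbowApexes_le [DecidableEq V] {r g b : κ} (hrg : r ≠ g) (hgb : g ≠ b)
    (hrb : r ≠ b) :
    (∑ d ∈ {d : G.Dart | c d.edge = g}, #(G.rainbowApexes c r b d.fst d.snd)) ^ 2 ≤
      2 * #{e ∈ G.edgeFinset | c e = r} * #{e ∈ G.edgeFinset | c e = g} *
        #{e ∈ G.edgeFinset | c e = b} :=
  calc _ ≤ #{d : G.Dart | c d.edge = g} *
        ∑ d ∈ {d : G.Dart | c d.edge = g}, #(G.rainbowApexes c r b d.fst d.snd) ^ 2 :=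
        sq_sum_le_card_mul_sum_sq
    _ ≤ 2 * #{e ∈ G.edgeFinset | c e = g} *
        (#{e ∈ G.edgeFinset | c e = r} * #{e ∈ G.edgeFinset | c e = b}) := by
        rw [G.card_filter_dart_edge (c · = g)]
        gcongr
        exact G.sum_sq_card_rainbowApexes_le c hrg hgb hrb
    _ = _ := by ring

theorem card_cliqueFinset_three_eq_sum_card_rainbowApexes [DecidableEq V] {c : Sym2 V → Fin 3}
    (hc : ∀ t ∈ G.cliqueFinset 3, Rainbow G c t) :
    #(G.cliqueFinset 3) =
      ∑ d ∈ {d : G.Dart | c d.edge = 1}, #(G.rainbowApexes c 0 2 d.fst d.snd) := by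
  rw [← card_sigma]
  symm
  refine card_bij (fun p _ => {p.1.fst, p.1.snd, p.2}) ?_ ?_ ?_
  · rintro ⟨d, x⟩ h
    simp only [mem_sigma, mem_filter, mem_univ, true_and, rainbowApexes] at h
    rw [mem_cliqueFinset_iff, is3Clique_triple_iff]
    exact ⟨d.adj, h.2.1, h.2.2.1⟩
  · rintro ⟨⟨⟨u, v⟩, huv⟩, x⟩ h ⟨⟨⟨u', v'⟩, huv'⟩, x'⟩ h' heq
    simp only [mem_sigma, mem_filter, mem_univ, true_and, rainbowApexes, Dart.edge_mk] at h h' heq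
    suffices u' = u ∧ v' = v ∧ x' = x by obtain ⟨rfl, rfl, rfl⟩ := this; rfl
    have hsub := heq.ge
    simp only [insert_subset_iff, singleton_subset_iff, mem_insert, mem_singleton] at hsub
    obtain ⟨hu, hv, hx⟩ := hsub
    -- the colours of the three edges pin down which vertex is which
    rcases hu with rfl | rfl | rfl <;> rcases hv with rfl | rfl | rfl <;>
      rcases hx with rfl | rfl | rfl <;> simp_all [Sym2.eq_swap]
  · intro t ht
    obtain ⟨u, v, w, huv, huw, hvw, h₁, h₂, h₃, rfl⟩ := (hc t ht).exists_eq_insert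
    exact ⟨⟨⟨(u, v), huv⟩, w⟩, by simp [rainbowApexes, *], rfl⟩

end SimpleGraph

open SimpleGraph

theorem triangle_bound_all_rainbow {V : Type*} [Fintype V] [DecidableEq V]
    (G : SimpleGraph V) (c : Sym2 V → Fin 3) (R Gr B T : ℕ)
    (hall : ∀ t : Finset V, IsTriangle G t → Rainbow G c t)
    (hR : R = {e | e ∈ G.edgeSet ∧ c e = 0}.ncard)
    (hG : Gr = {e | e ∈ G.edgeSet ∧ c e = 1}.ncard)
    (hB : B = {e | e ∈ G.edgeSet ∧ c e = 2}.ncard)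
    (hT : T = {t : Finset V | IsTriangle G t}.ncard) :
    (T : ℝ) ≤ Real.sqrt (2 * R * Gr * B) := by
  classical
  have hcolor (i : Fin 3) :
      {e | e ∈ G.edgeSet ∧ c e = i}.ncard = #{e ∈ G.edgeFinset | c e = i} := by
    rw [← Set.ncard_coe_finset]
    congr
    ext
    simp
  have htriangles : T = #(G.cliqueFinset 3) := by
    rw [hT, ← Set.ncard_coe_finset]
    congr
    ext
    simp [isTriangle_iff_isNClique_three]
  have hsq := G.sq_sum_card_rainbowApexes_le c (r := 0) (g := 1) (b := 2) (by decide) (by decide)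
    (by decide)
  rw [← card_cliqueFinset_three_eq_sum_card_rainbowApexes G fun t ht =>
    hall t (isTriangle_iff_isNClique_three.2 (mem_cliqueFinset_iff.1 ht))] at hsq
  rw [← hcolor, ← hcolor, ← hcolor, ← hR, ← hG, ← hB, ← htriangles] at hsq
  exact Real.le_sqrt_of_sq_le (by exact_mod_cast hsq)
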